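/- For the extrusion operator E_v on pointed k-chains, defined by E_v Σ(p_i;α_i) = Σ(p_i; v ∧ α_i), the bound ‖E_v(A)‖_{B^r} ≤ ‖v‖·‖A‖_{B^r} holds for every pointed k-chain A, every v ∈ ℝⁿ, and every r ≥ 0. -/

import Mathlib

/-! Pointed chains: finitely supported functions from points of `E` to "k-vectors" in `V`,
difference chains, and the `B^r` norms of J. Harrison's theory of differential chains. -/

open Finsupp

variable {E V : Type*} [NormedAddCommGroup E] [NormedSpace ℝ E]
  [NormedAddCommGroup V] [NormedSpace ℝ V]

/-- The difference chain `Δ^j_U (p; α)`, for a list `U = [u₁,…,u_j]` of vectors. -/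
noncomputable def diffChain : List E → E → V → (E →₀ V)
  | [], p, α => Finsupp.single p α
  | u :: U, p, α => Finsupp.mapDomain (· + u) (diffChain U p α) - diffChain U p α

/-- The weight `|Δ^j_U(p;α)|_j := ‖u₁‖⋯‖u_j‖‖α‖` of a difference chain. -/
noncomputable def dweight (U : List E) (α : V) : ℝ := (U.map fun u => ‖u‖).prod * ‖α‖

/-- The `r`-norm `‖A‖_{B^r}` on pointed chains: the infimum of `Σᵢ |Δ^{jᵢ}_{Uᵢ}(pᵢ;αᵢ)|_{jᵢ}`
over all decompositions `A = Σᵢ Δ^{jᵢ}_{Uᵢ}(pᵢ;αᵢ)` with all `jᵢ ≤ r`. -/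
noncomputable def Bnorm (r : ℕ) (A : E →₀ V) : ℝ :=
  sInf {s : ℝ | ∃ L : List (List E × E × V),
    (∀ t ∈ L, t.1.length ≤ r) ∧
    A = (L.map fun t => diffChain t.1 t.2.1 t.2.2).sum ∧
    s = (L.map fun t => dweight t.1 t.2.2).sum}

/-! Extrusion by `v` is `mapRange` of the linear map `α ↦ v ∧ α`, which commutes with
difference chains: `E_v Δ_U(p; α) = Δ_U(p; v ∧ α)`. So every decomposition of `A` into
difference chains is carried to a decomposition of `E_v A` of the same orders, whose weight
is at most `‖v‖` times the original one; taking the infimum over decompositions gives the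
bound. -/

theorem Finsupp.mapRange_list_sum {α M N F : Type*} [AddCommMonoid M] [AddCommMonoid N]
    [FunLike F M N] [AddMonoidHomClass F M N] (f : F) (L : List (α →₀ M)) :
    mapRange f (map_zero f) L.sum = (L.map (mapRange f (map_zero f))).sum :=
  map_list_sum (mapRange.addMonoidHom (f : M →+ N)) L

section

omit [NormedSpace ℝ E] [NormedSpace ℝ V]

variable {V' : Type*} [NormedAddCommGroup V']

lemma mapRange_diffChain {F : Type*} [FunLike F V V'] [AddMonoidHomClass F V V'] (f : F)
    (U : List E) (p : E) (α : V) :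
    mapRange f (map_zero f) (diffChain U p α) = diffChain U p (f α) := by
  induction U with
  | nil => exact mapRange_single
  | cons u U ih =>
    rw [diffChain, diffChain, mapRange_sub', ← ih,
      mapDomain_mapRange _ _ _ _ (map_add f)]

lemma dweight_nonneg (U : List E) (α : V) : 0 ≤ dweight U α :=
  mul_nonneg (List.prod_nonneg (List.forall_mem_map.2 fun u _ => norm_nonneg u))
    (norm_nonneg α)

lemma dweight_le_of_norm_le {U : List E} {α : V} {β : V'} {C : ℝ} (h : ‖β‖ ≤ C * ‖α‖) :
    dweight U β ≤ C * dweight U α := by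
  rw [dweight, dweight, mul_left_comm]
  exact mul_le_mul_of_nonneg_left h (List.prod_nonneg (List.forall_mem_map.2 fun u _ => norm_nonneg u))

lemma Bnorm_le {r : ℕ} {A : E →₀ V} (L : List (List E × E × V))
    (hlen : ∀ t ∈ L, t.1.length ≤ r) (hA : A = (L.map fun t => diffChain t.1 t.2.1 t.2.2).sum) :
    Bnorm r A ≤ (L.map fun t => dweight t.1 t.2.2).sum := by
  refine csInf_le ⟨0, ?_⟩ ⟨L, hlen, hA, rfl⟩
  rintro _ ⟨L', -, -, rfl⟩
  exact List.sum_nonneg (List.forall_mem_map.2 fun t _ => dweight_nonneg _ _)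

/-- The trivial decomposition of `A` into the `0`-difference chains `(p; A p)`. -/
lemma exists_diffChain_decomposition (r : ℕ) (A : E →₀ V) :
    ∃ L : List (List E × E × V), (∀ t ∈ L, t.1.length ≤ r) ∧
      A = (L.map fun t => diffChain t.1 t.2.1 t.2.2).sum := by
  refine ⟨A.support.toList.map fun p => ([], p, A p), by simp, ?_⟩
  simp only [List.map_map, Function.comp_def, diffChain, Finset.sum_map_toList]
  exact (sum_single A).symm

lemma le_mul_Bnorm {r : ℕ} {A : E →₀ V} {x c : ℝ} (hc : 0 ≤ c)
    (h : ∀ L : List (List E × E × V), (∀ t ∈ L, t.1.length ≤ r) →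
      A = (L.map fun t => diffChain t.1 t.2.1 t.2.2).sum →
      x ≤ c * (L.map fun t => dweight t.1 t.2.2).sum) :
    x ≤ c * Bnorm r A := by
  obtain ⟨L, hlen, hA⟩ := exists_diffChain_decomposition r A
  rw [Bnorm, ← smul_eq_mul, ← Real.sInf_smul_of_nonneg hc]
  refine le_csInf (Set.Nonempty.smul_set ⟨_, L, hlen, hA, rfl⟩) ?_
  rintro _ ⟨_, ⟨L, hlen, hA, rfl⟩, rfl⟩
  exact h L hlen hA

theorem Bnorm_mapRange_le {F : Type*} [FunLike F V V'] [AddMonoidHomClass F V V'] (f : F)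
    {C : ℝ} (hC : 0 ≤ C) (hf : ∀ α, ‖f α‖ ≤ C * ‖α‖) (r : ℕ) (A : E →₀ V) :
    Bnorm r (mapRange f (map_zero f) A) ≤ C * Bnorm r A := by
  refine le_mul_Bnorm hC fun L hlen hA => ?_
  calc Bnorm r (mapRange f (map_zero f) A)
      ≤ ((L.map fun t => (t.1, t.2.1, f t.2.2)).map fun t => dweight t.1 t.2.2).sum := by
        refine Bnorm_le _ (List.forall_mem_map.2 hlen) ?_
        rw [hA, mapRange_list_sum, List.map_map, List.map_map]
        simp only [Function.comp_def, mapRange_diffChain]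
    _ ≤ C * (L.map fun t => dweight t.1 t.2.2).sum := by
        rw [List.map_map, ← List.sum_map_mul_left]
        exact List.sum_le_sum fun t _ => dweight_le_of_norm_le (hf t.2.2)

end

/-- Extrusion `E_v` (wedging each `k`-vector with the constant vector
field `v`, here an arbitrary bilinear wedge satisfying the mass bound
`‖v ∧ α‖ ≤ ‖v‖‖α‖`) satisfies `‖E_v(A)‖_{B^r} ≤ ‖v‖·‖A‖_{B^r}` for every pointed chain
`A`, every `v`, and every `r ≥ 0`. -/
theorem extrusion_bound {V' : Type*} [NormedAddCommGroup V'] [NormedSpace ℝ V']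
    (wedge : E →ₗ[ℝ] V →ₗ[ℝ] V')
    (hwedge : ∀ (v : E) (α : V), ‖wedge v α‖ ≤ ‖v‖ * ‖α‖)
    (v : E) (r : ℕ) (A : E →₀ V) :
    Bnorm r (Finsupp.mapRange (wedge v) (map_zero _) A) ≤ ‖v‖ * Bnorm r A :=
  Bnorm_mapRange_le (wedge v) (norm_nonneg v) (hwedge v) r A
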